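/- arXiv:1302.4235 — 2 statements merged into one kernel-verified Lean document; each statement's English description precedes it below -/
import Mathlib

section
/- Let K be a field, a ∈ K, and let c = ∑_{n≥0} c_n x^n be a formal power series over K with c_0 = 1. Let f = ∑_{n≥0} f_n x^n be the formal power series satisfying f · (1 − a x² c) = 1. Then for every n ≥ 1, det(f_{i+j})_{i,j=0}^{n} = a^n · det(c_{i+j})_{i,j=0}^{n−1}. -/
/-!
Put `g = 1 - a X² c`, so `f g = 1` and `g₀ = f₀ = 1`. Splitting the convolution
`∑_{l ≤ i+j} f_l g_{i+j-l} = [i + j = 0]` at `l = i` shows that the Hankel matrix of `f`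
factors as `H(f) · T(g)ᵀ = T(f) · diag(1, H(-g_{·+2}))`, where `T(u)` is the lower triangular
Toeplitz matrix of `u`. Both Toeplitz factors have determinant `1`, and `-g_{t+2} = a c_t`.
-/

open Finset Matrix PowerSeries

theorem Fin.sum_ite_val_le_eq_sum_range {M : Type*} [AddCommMonoid M] {m j : ℕ} (hj : j < m)
    (F : ℕ → M) :
    ∑ l : Fin m, (if (l : ℕ) ≤ j then F l else 0) = ∑ l ∈ range (j + 1), F l := by
  rw [Fin.sum_univ_eq_sum_range (fun l => if l ≤ j then F l else 0), ← sum_filter]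
  congr 1
  ext l
  simp only [mem_filter, mem_range]
  omega

namespace Matrix

variable {R : Type*} [CommRing R]

def hankel (u : ℕ → R) (m : ℕ) : Matrix (Fin m) (Fin m) R :=
  of fun i j => u (i + j)

def lowerToeplitz (u : ℕ → R) (m : ℕ) : Matrix (Fin m) (Fin m) R :=
  of fun i j => if (j : ℕ) ≤ i then u (i - j) else 0

/-- The entries of the block matrix `diag(1, hankel w)`. -/
def borderedHankelEntry (w : ℕ → R) : ℕ → ℕ → R
  | 0, 0 => 1
  | 0, _ + 1 => 0
  | _ + 1, 0 => 0
  | k + 1, j + 1 => w (k + j)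

def borderedHankel (w : ℕ → R) (m : ℕ) : Matrix (Fin m) (Fin m) R :=
  of fun i j => borderedHankelEntry w i j

theorem det_lowerToeplitz (u : ℕ → R) (m : ℕ) : (lowerToeplitz u m).det = u 0 ^ m := by
  rw [det_of_isLowerTriangular (lowerToeplitz u m) fun i j hij => if_neg (not_le.mpr hij)]
  simp [lowerToeplitz]

theorem det_borderedHankel (w : ℕ → R) (n : ℕ) :
    (borderedHankel w (n + 1)).det = (hankel w n).det := by
  rw [det_succ_column_zero, Fin.sum_univ_succ]
  simp [borderedHankel, borderedHankelEntry, hankel, submatrix]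

theorem hankel_mul_lowerToeplitz_transpose_apply (u v : ℕ → R) {m : ℕ} (i j : Fin m) :
    (hankel u m * (lowerToeplitz v m)ᵀ) i j = ∑ l ∈ range (j + 1), u (i + l) * v (j - l) := by
  simp only [mul_apply, hankel, lowerToeplitz, transpose_apply, of_apply, mul_ite, mul_zero]
  exact Fin.sum_ite_val_le_eq_sum_range j.isLt (fun l => u (i + l) * v (j - l))

theorem lowerToeplitz_mul_borderedHankel_apply (u w : ℕ → R) {m : ℕ} (i j : Fin m) :
    (lowerToeplitz u m * borderedHankel w m) i j =
      ∑ k ∈ range (i + 1), u (i - k) * borderedHankelEntry w k j := by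
  simp only [mul_apply, borderedHankel, lowerToeplitz, of_apply, ite_mul, zero_mul]
  exact Fin.sum_ite_val_le_eq_sum_range i.isLt (fun k => u (i - k) * borderedHankelEntry w k j)

end Matrix

namespace PowerSeries

variable {R : Type*} [CommRing R]

theorem coeff_add_mul_eq_sum_range_add_sum_range (f g : R⟦X⟧) (i j : ℕ) :
    coeff (i + j) (f * g) = ∑ l ∈ range i, coeff l f * coeff (i + j - l) g +
      ∑ l ∈ range (j + 1), coeff (i + l) f * coeff (j - l) g := by
  rw [coeff_mul, Nat.sum_antidiagonal_eq_sum_range_succ_mk, Nat.succ_eq_add_one, add_assoc,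
    sum_range_add]
  congr 1
  refine sum_congr rfl fun l _ => ?_
  rw [show i + j - (i + l) = j - l by omega]

theorem sum_coeff_mul_eq_sum_coeff_mul_borderedHankelEntry {f g : R⟦X⟧} (hfg : f * g = 1)
    (hg : constantCoeff g = 1) (i j : ℕ) :
    ∑ l ∈ range (j + 1), coeff (i + l) f * coeff (j - l) g =
      ∑ k ∈ range (i + 1), coeff (i - k) f *
        borderedHankelEntry (fun t => -coeff (t + 2) g) k j := by
  rw [sum_range_succ' _ i]
  cases j with
  | zero => simp [borderedHankelEntry, hg]
  | succ j =>
    have hsum := coeff_add_mul_eq_sum_range_add_sum_range f g i (j + 1)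
    rw [hfg, coeff_one, if_neg (by omega)] at hsum
    rw [eq_neg_of_add_eq_zero_right hsum.symm, ← sum_range_reflect, ← sum_neg_distrib]
    simp only [borderedHankelEntry, mul_zero, add_zero]
    refine sum_congr rfl fun k hk => ?_
    rw [mem_range] at hk
    rw [show i - 1 - k = i - (k + 1) by omega,
      show i + (j + 1) - (i - (k + 1)) = k + j + 2 by omega]
    ring

theorem hankel_mul_lowerToeplitz_transpose_eq {f g : R⟦X⟧} (hfg : f * g = 1)
    (hg : constantCoeff g = 1) (m : ℕ) :
    hankel (coeff · f) m * (lowerToeplitz (coeff · g) m)ᵀ =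
      lowerToeplitz (coeff · f) m * borderedHankel (fun t => -coeff (t + 2) g) m := by
  ext i j
  rw [hankel_mul_lowerToeplitz_transpose_apply, lowerToeplitz_mul_borderedHankel_apply,
    sum_coeff_mul_eq_sum_coeff_mul_borderedHankelEntry hfg hg]

theorem det_hankel_succ_of_mul_eq_one {f g : R⟦X⟧} (hfg : f * g = 1)
    (hg : constantCoeff g = 1) (n : ℕ) :
    (hankel (coeff · f) (n + 1)).det = (hankel (fun t => -coeff (t + 2) g) n).det := by
  have hf : coeff 0 f = 1 := by
    simpa [hg] using congrArg constantCoeff hfg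
  have hdet := congrArg det (hankel_mul_lowerToeplitz_transpose_eq hfg hg (n + 1))
  rwa [det_mul, det_mul, det_transpose, det_lowerToeplitz, det_lowerToeplitz, det_borderedHankel,
    coeff_zero_eq_constantCoeff_apply, hg, hf, one_pow, mul_one, one_mul] at hdet

end PowerSeries

theorem hankel_det_of_inv_one_sub_aXsq_general {K : Type*} [Field K] (a : K) (c f : PowerSeries K)
    (hf : f * (1 - PowerSeries.C a * PowerSeries.X ^ 2 * c) = 1) :
    ∀ n : ℕ, 1 ≤ n →
      Matrix.det (Matrix.of fun i j : Fin (n + 1) =>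
          PowerSeries.coeff ((i : ℕ) + (j : ℕ)) f) =
        a ^ n * Matrix.det (Matrix.of fun i j : Fin n =>
          PowerSeries.coeff ((i : ℕ) + (j : ℕ)) c) := by
  intro n _
  have hg : constantCoeff (1 - C a * X ^ 2 * c) = 1 := by simp
  have hshift : (fun t => -coeff (t + 2) (1 - C a * X ^ 2 * c)) = fun t => a * coeff t c := by
    ext t
    simp [mul_assoc, coeff_C_mul, coeff_X_pow_mul, coeff_one]
  have hsmul : hankel (fun t => a * coeff t c) n = a • hankel (coeff · c) n := rfl
  have hdet := det_hankel_succ_of_mul_eq_one hf hg n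
  rwa [hshift, hsmul, det_smul, Fintype.card_fin] at hdet

/-- If `f = 1/(1 − a x² c(x))` with `c₀ = 1`, then
`det(f_{i+j})_{i,j=0}^n = aⁿ · det(c_{i+j})_{i,j=0}^{n−1}` for all `n ≥ 1`. -/
theorem hankel_det_of_inv_one_sub_aXsq {K : Type*} [Field K] (a : K) (c f : PowerSeries K)
    (hc0 : PowerSeries.coeff 0 c = 1)
    (hf : f * (1 - PowerSeries.C a * PowerSeries.X ^ 2 * c) = 1) :
    ∀ n : ℕ, 1 ≤ n →
      Matrix.det (Matrix.of fun i j : Fin (n + 1) =>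
          PowerSeries.coeff ((i : ℕ) + (j : ℕ)) f) =
        a ^ n * Matrix.det (Matrix.of fun i j : Fin n =>
          PowerSeries.coeff ((i : ℕ) + (j : ℕ)) c) :=
  hankel_det_of_inv_one_sub_aXsq_general a c f hf
end

section
/- Let K be a field, a ∈ K, and let c = ∑_{n≥0} c_n x^n be a formal power series over K with c_0 = 1. Let f = ∑_{n≥0} f_n x^n satisfy f · (1 − a x c) = 1. Then for every n ≥ 1, det(f_{i+j})_{i,j=0}^{n} = a^n · det(c_{i+j+1})_{i,j=0}^{n−1}, and for every n ≥ 0, det(f_{i+j+1})_{i,j=0}^{n} = a^{n+1} · det(c_{i+j})_{i,j=0}^{n}. -/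
/-!
Let `H_u(x, y) = ∑ u_{i+j} xⁱ yʲ`, so that `(x - y) H_u = x u(x) - y u(y)`, and let `u⁺` be the
shift `∑ u_{n+1} xⁿ`, so that `(x - y) H_{u⁺} = u(x) - u(y)`. If `f (1 - a x c) = 1`, clearing
denominators gives `H_f = f(x) f(y) (1 + a x y H_{c⁺})` and `H_{f⁺} = a f(x) f(y) H_c`. Comparing
coefficients, the Hankel matrices of `f` and `f⁺` are `L W Lᵀ` with `L` the unitriangular Toeplitz
matrix of `f` and `W` the coefficient matrix of the last factor, whose determinant is read off.
-/

open PowerSeries Finset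
open scoped Matrix

namespace PowerSeries

variable {R : Type*} [CommRing R]

/-- The outer variable plays the role of `x` and the inner one of `y`: for `u : R⟦X⟧`, `map C u` is
`u(x)` and `C u` is `u(y)`. -/
noncomputable def hankel (u : R⟦X⟧) : R⟦X⟧⟦X⟧ :=
  mk fun i => mk fun j => coeff (i + j) u

@[simp]
lemma coeff_coeff_hankel (u : R⟦X⟧) (i j : ℕ) :
    coeff j (coeff i (hankel u)) = coeff (i + j) u := by
  simp [hankel]

lemma X_sub_C_X_mul_hankel (u : R⟦X⟧) :
    (X - C X) * hankel u = X * map C u - C X * C u := by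
  refine ext fun i => ext fun j => ?_
  rcases i with _ | i <;> rcases j with _ | j <;>
    simp [sub_mul, coeff_succ_X_mul, coeff_zero_X_mul, coeff_C_mul, coeff_C, ← add_assoc,
      add_right_comm _ 1, -coeff_zero_eq_constantCoeff]

lemma X_sub_C_X_mul_hankel_shift (u : R⟦X⟧) :
    (X - C X) * hankel (mk fun n => coeff (n + 1) u) = map C u - C u := by
  conv_rhs => rw [eq_X_mul_shift_add_const u]
  simp only [X_sub_C_X_mul_hankel, map_add, map_mul, map_C, map_X]
  ring

lemma X_sub_C_X_ne_zero [Nontrivial R] : (X - C X : R⟦X⟧⟦X⟧) ≠ 0 := by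
  intro h
  simpa [coeff_C] using congrArg (coeff 1) h

noncomputable def lowerToeplitz (u : R⟦X⟧) (n : ℕ) : Matrix (Fin n) (Fin n) R :=
  Matrix.of fun i p => if p ≤ i then coeff (i - p : ℕ) u else 0

noncomputable def coeffMatrix (B : R⟦X⟧⟦X⟧) (n : ℕ) : Matrix (Fin n) (Fin n) R :=
  Matrix.of fun i j => coeff j (coeff i B)

lemma det_lowerToeplitz (u : R⟦X⟧) (n : ℕ) :
    (lowerToeplitz u n).det = constantCoeff u ^ n := by
  rw [Matrix.det_of_isLowerTriangular (lowerToeplitz u n)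
    fun i p (h : i < p) => if_neg (not_le.mpr h)]
  simp [lowerToeplitz]

lemma lowerToeplitz_mulVec_apply (u : R⟦X⟧) {n : ℕ} (g : ℕ → R) (i : Fin n) :
    (lowerToeplitz u n *ᵥ fun p => g p) i =
      ∑ pq ∈ antidiagonal (i : ℕ), coeff pq.1 u * g pq.2 := by
  have hrange : (Finset.range n).filter (· ≤ (i : ℕ)) = Finset.range (i + 1) := by
    refine Finset.ext fun p => ?_
    simp only [Finset.mem_filter, Finset.mem_range]
    omega
  calc (lowerToeplitz u n *ᵥ fun p => g p) i
      = ∑ p ∈ Finset.range n, if p ≤ (i : ℕ) then coeff (i - p) u * g p else 0 := by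
        rw [← Fin.sum_univ_eq_sum_range
          (fun p => if p ≤ (i : ℕ) then coeff (i - p) u * g p else 0)]
        simp only [Matrix.mulVec, dotProduct, lowerToeplitz, Matrix.of_apply, ite_mul, zero_mul,
          Fin.le_def]
    _ = ∑ p ∈ Finset.range (i + 1), coeff (i - p) u * g p := by rw [← sum_filter, hrange]
    _ = ∑ pq ∈ antidiagonal (i : ℕ), coeff pq.2 u * g pq.1 :=
        (Nat.sum_antidiagonal_eq_sum_range_succ (fun a b => coeff b u * g a) i).symm
    _ = _ := Nat.sum_antidiagonal_swap (f := fun pq => coeff pq.1 u * g pq.2)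

lemma coeff_coeff_map_C_mul_C_mul (u : R⟦X⟧) (B : R⟦X⟧⟦X⟧) (i j : ℕ) :
    coeff j (coeff i (map C u * (C u * B))) =
      ∑ pp ∈ antidiagonal i, coeff pp.1 u *
        ∑ qq ∈ antidiagonal j, coeff qq.1 u * coeff qq.2 (coeff pp.2 B) := by
  simp only [coeff_mul i, coeff_map, coeff_C_mul, map_sum]
  simp only [coeff_mul j, mul_sum]

lemma lowerToeplitz_mul_coeffMatrix_mul_transpose (u : R⟦X⟧) (B : R⟦X⟧⟦X⟧) (n : ℕ) :
    lowerToeplitz u n * coeffMatrix B n * (lowerToeplitz u n)ᵀ =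
      coeffMatrix (map C u * (C u * B)) n := by
  ext i j
  have hinner (p : ℕ) : ∑ q : Fin n, coeff (q : ℕ) (coeff p B) * lowerToeplitz u n j q =
      ∑ qq ∈ antidiagonal (j : ℕ), coeff qq.1 u * coeff qq.2 (coeff p B) := by
    rw [← lowerToeplitz_mulVec_apply u (fun q => coeff q (coeff p B))]
    simp only [Matrix.mulVec, dotProduct, mul_comm]
  calc (lowerToeplitz u n * coeffMatrix B n * (lowerToeplitz u n)ᵀ) i j
      = ∑ p : Fin n, lowerToeplitz u n i p *
          ∑ q : Fin n, coeff (q : ℕ) (coeff p B) * lowerToeplitz u n j q := by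
        rw [Matrix.mul_assoc]
        simp only [Matrix.mul_apply, Matrix.transpose_apply, coeffMatrix, Matrix.of_apply]
    _ = _ := by
        simp only [hinner]
        rw [coeffMatrix, Matrix.of_apply, coeff_coeff_map_C_mul_C_mul]
        exact lowerToeplitz_mulVec_apply u
          (fun p => ∑ qq ∈ antidiagonal (j : ℕ), coeff qq.1 u * coeff qq.2 (coeff p B)) i

lemma det_coeffMatrix_map_C_mul_C_mul {u : R⟦X⟧} (hu : constantCoeff u = 1) (B : R⟦X⟧⟦X⟧)
    (n : ℕ) : (coeffMatrix (map C u * (C u * B)) n).det = (coeffMatrix B n).det := by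
  rw [← lowerToeplitz_mul_coeffMatrix_mul_transpose, Matrix.det_mul, Matrix.det_mul,
    Matrix.det_transpose, det_lowerToeplitz, hu, one_pow, one_mul, mul_one]

lemma det_coeffMatrix_one_add_X_mul_C_X_mul (B : R⟦X⟧⟦X⟧) (n : ℕ) :
    (coeffMatrix (1 + X * (C X * B)) (n + 1)).det = (coeffMatrix B n).det := by
  have hrow (j : Fin n) : coeffMatrix (1 + X * (C X * B)) (n + 1) 0 j.succ = 0 := by
    simp [coeffMatrix, coeff_one, coeff_zero_X_mul]
  have hminor : (coeffMatrix (1 + X * (C X * B)) (n + 1)).submatrix Fin.succ Fin.succ =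
      coeffMatrix B n := by
    ext p q
    simp [coeffMatrix, coeff_one, coeff_succ_X_mul, coeff_C_mul]
  have hcorner : coeffMatrix (1 + X * (C X * B)) (n + 1) 0 0 = 1 := by
    simp [coeffMatrix, coeff_zero_X_mul]
  rw [Matrix.det_succ_row_zero, Fin.sum_univ_succ]
  simp only [hrow, hcorner, Fin.succAbove_zero, hminor, Fin.val_zero, pow_zero, one_mul, mul_zero,
    zero_mul, sum_const_zero, add_zero]

lemma coeffMatrix_C_C_mul (a : R) (B : R⟦X⟧⟦X⟧) (n : ℕ) :
    coeffMatrix (C (C a) * B) n = a • coeffMatrix B n := by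
  ext i j
  simp [coeffMatrix, coeff_C_mul]

lemma coeffMatrix_hankel (u : R⟦X⟧) (n : ℕ) :
    coeffMatrix (hankel u) n = Matrix.of fun i j : Fin n => coeff ((i : ℕ) + j) u := by
  ext i j
  simp [coeffMatrix]

section Domain

variable [IsDomain R] {a : R} {c f : R⟦X⟧}

lemma hankel_eq_of_mul_one_sub_eq_one (hf : f * (1 - C a * X * c) = 1) :
    hankel f =
      map C f * (C f * (1 + X * (C X * (C (C a) * hankel (mk fun n => coeff (n + 1) c))))) := by
  have hx := congrArg (map C) hf
  have hy := congrArg C hf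
  simp only [map_mul, map_sub, map_one, map_C, map_X] at hx hy
  refine mul_left_cancel₀ X_sub_C_X_ne_zero ?_
  rw [X_sub_C_X_mul_hankel]
  linear_combination (-(X * map C f)) * hy + (C X * C f) * hx -
    (map C f * C f * C (C a) * X * C X) * X_sub_C_X_mul_hankel_shift c

lemma hankel_shift_eq_of_mul_one_sub_eq_one (hf : f * (1 - C a * X * c) = 1) :
    hankel (mk fun n => coeff (n + 1) f) = map C f * (C f * (C (C a) * hankel c)) := by
  have hx := congrArg (map C) hf
  have hy := congrArg C hf
  simp only [map_mul, map_sub, map_one, map_C, map_X] at hx hy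
  refine mul_left_cancel₀ X_sub_C_X_ne_zero ?_
  rw [X_sub_C_X_mul_hankel_shift]
  linear_combination (-map C f) * hy + C f * hx -
    (map C f * C f * C (C a)) * X_sub_C_X_mul_hankel c

end Domain

end PowerSeries

theorem hankel_det_of_inv_one_sub_aX_general {K : Type*} [Field K] (a : K) (c f : PowerSeries K)
    (hf : f * (1 - PowerSeries.C a * PowerSeries.X * c) = 1) :
    (∀ n : ℕ, 1 ≤ n →
      Matrix.det (Matrix.of fun i j : Fin (n + 1) =>
          PowerSeries.coeff ((i : ℕ) + (j : ℕ)) f) =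
        a ^ n * Matrix.det (Matrix.of fun i j : Fin n =>
          PowerSeries.coeff ((i : ℕ) + (j : ℕ) + 1) c)) ∧
    (∀ n : ℕ,
      Matrix.det (Matrix.of fun i j : Fin (n + 1) =>
          PowerSeries.coeff ((i : ℕ) + (j : ℕ) + 1) f) =
        a ^ (n + 1) * Matrix.det (Matrix.of fun i j : Fin (n + 1) =>
          PowerSeries.coeff ((i : ℕ) + (j : ℕ)) c)) := by
  have hf0 : constantCoeff f = 1 := by simpa using congrArg constantCoeff hf
  refine ⟨fun n _ => ?_, fun n => ?_⟩
  · have h := congrArg (fun B => (coeffMatrix B (n + 1)).det) (hankel_eq_of_mul_one_sub_eq_one hf)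
    simpa only [coeffMatrix_hankel, det_coeffMatrix_map_C_mul_C_mul hf0,
      det_coeffMatrix_one_add_X_mul_C_X_mul, coeffMatrix_C_C_mul, Matrix.det_smul,
      Fintype.card_fin, coeff_mk] using h
  · have h := congrArg (fun B => (coeffMatrix B (n + 1)).det)
      (hankel_shift_eq_of_mul_one_sub_eq_one hf)
    simpa only [coeffMatrix_hankel, det_coeffMatrix_map_C_mul_C_mul hf0, coeffMatrix_C_C_mul,
      Matrix.det_smul, Fintype.card_fin, coeff_mk] using h

/-- If `f = 1/(1 − a x c(x))` with `c₀ = 1`, then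
`det(f_{i+j})_{i,j=0}^n = aⁿ det(c_{i+j+1})_{i,j=0}^{n−1}` for `n ≥ 1` and
`det(f_{i+j+1})_{i,j=0}^n = a^{n+1} det(c_{i+j})_{i,j=0}^n` for `n ≥ 0`. -/
theorem hankel_det_of_inv_one_sub_aX {K : Type*} [Field K] (a : K) (c f : PowerSeries K)
    (hc0 : PowerSeries.coeff 0 c = 1)
    (hf : f * (1 - PowerSeries.C a * PowerSeries.X * c) = 1) :
    (∀ n : ℕ, 1 ≤ n →
      Matrix.det (Matrix.of fun i j : Fin (n + 1) =>
          PowerSeries.coeff ((i : ℕ) + (j : ℕ)) f) =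
        a ^ n * Matrix.det (Matrix.of fun i j : Fin n =>
          PowerSeries.coeff ((i : ℕ) + (j : ℕ) + 1) c)) ∧
    (∀ n : ℕ,
      Matrix.det (Matrix.of fun i j : Fin (n + 1) =>
          PowerSeries.coeff ((i : ℕ) + (j : ℕ) + 1) f) =
        a ^ (n + 1) * Matrix.det (Matrix.of fun i j : Fin (n + 1) =>
          PowerSeries.coeff ((i : ℕ) + (j : ℕ)) c)) :=
  hankel_det_of_inv_one_sub_aX_general a c f hf
end
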